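/- arXiv:1405.2244 — 2 statements merged into one kernel-verified Lean document; each statement's English description precedes it below -/
import Mathlib

section
/- Let d be an admissible ultra-metric on X̄ = X ∪ X⁻¹ ∪ {e}. Then the Graev ultra-metric δ_u is maximal among all invariant ultra-metrics on the free group F(X) that extend the metric d defined on X̄: if R is any invariant ultra-metric on F(X) with R(a,b) = d(a,b) for all a,b ∈ X̄, then R(v,w) ≤ δ_u(v,w) for all v,w ∈ F(X). -/
/-! Graev ultra-metrics on free groups (after Gao, Savchenko–Zarichnyi and
Shlossberg, "On Graev type ultra-metrics"). -/

namespace GraevStmt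

variable {X : Type*}

/-- The alphabet `X̄ = X ∪ X⁻¹ ∪ {e}`: `none` is the letter `e`,
`some (x, true)` is the letter `x` and `some (x, false)` is the letter `x⁻¹`. -/
abbrev Letter (X : Type*) := Option (X × Bool)

/-- The letter `e`. -/
def eL : Letter X := none

/-- The letter `x`, for `x ∈ X`. -/
def pos (x : X) : Letter X := some (x, true)

/-- The letter `x⁻¹`, for `x ∈ X`. -/
def neg (x : X) : Letter X := some (x, false)

/-- The formal inverse of a letter; `e⁻¹ = e` and `(x⁻¹)⁻¹ = x`. -/
def linv : Letter X → Letter X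
  | none => none
  | some (x, b) => some (x, !b)

/-- Interpretation of a letter as an element of the free group `F(X)`. -/
def toF : Letter X → FreeGroup X
  | none => 1
  | some (x, b) => FreeGroup.mk [(x, b)]

/-- The reduced word of a word `w ∈ W(X)` over the alphabet `X̄`, viewed as the
corresponding element of the free group `F(X)`. -/
def red (w : List (Letter X)) : FreeGroup X := (w.map toF).prod

/-- The canonical irreducible word over the alphabet `X̄` representing a given
element of the free group `F(X)`. -/
def wordOf [DecidableEq X] (w : FreeGroup X) : List (Letter X) :=
  w.toWord.map some

/-- `ρ_u(w, v)`: the maximum of the distances between corresponding letters of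
two words of equal length. -/
def rho (d : Letter X → Letter X → ℝ) (w v : List (Letter X)) : ℝ :=
  (List.zipWith d w v).foldr max 0

/-- The Graev ultra-metric `δ_u` on `F(X)` associated with `d`:
`δ_u(w, v) = inf {ρ_u(w*, v*) : lh(w*) = lh(v*), (w*)' = w, (v*)' = v}`. -/
noncomputable def graev (d : Letter X → Letter X → ℝ) (w v : FreeGroup X) : ℝ :=
  sInf {r : ℝ | ∃ w' v' : List (Letter X), w'.length = v'.length ∧
    red w' = w ∧ red v' = v ∧ r = rho d w' v'}

/-- `d` is an ultra-metric: symmetric, vanishing exactly on the diagonal and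
satisfying the strong triangle inequality. -/
def IsUltraMetric {A : Type*} (d : A → A → ℝ) : Prop :=
  (∀ a b, d a b = d b a) ∧ (∀ a b, d a b = 0 ↔ a = b) ∧
    ∀ a b c, d a c ≤ max (d a b) (d b c)

/-- An admissible ultra-metric on the alphabet `X̄`, i.e. an ultra-metric with
`d(x⁻¹, y⁻¹) = d(x, y)`, `d(x, e) = d(x⁻¹, e)` and `d(x⁻¹, y) = d(x, y⁻¹)`. -/
def IsAdmissible (d : Letter X → Letter X → ℝ) : Prop :=
  IsUltraMetric d ∧ (∀ x y : X, d (neg x) (neg y) = d (pos x) (pos y)) ∧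
    (∀ x : X, d (pos x) eL = d (neg x) eL) ∧
    ∀ x y : X, d (neg x) (pos y) = d (pos x) (neg y)

/-- A function `R` on `F(X) × F(X)` is (two-sided) invariant if
`R(uwv, uw'v) = R(w, w')` for all `u, v, w, w'`. -/
def IsInvariant (R : FreeGroup X → FreeGroup X → ℝ) : Prop :=
  ∀ u v w w' : FreeGroup X, R (u * w * v) (u * w' * v) = R w w'

/-- A match on `{0, …, n-1}`: an involution `θ` such that there are no
`i < j < θ(i) < θ(j)`. -/
def IsMatch {n : ℕ} (θ : Fin n → Fin n) : Prop :=
  (∀ i, θ (θ i) = i) ∧ ∀ i j : Fin n, ¬(i < j ∧ j < θ i ∧ θ i < θ j)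

/-- The word `w^θ` associated with a word `w` and a match `θ`:
its `i`-th letter is `x_i` if `θ(i) > i`, `e` if `θ(i) = i`, and
`x_{θ(i)}⁻¹` if `θ(i) < i`. -/
def matchWord (w : List (Letter X)) (θ : Fin w.length → Fin w.length) :
    List (Letter X) :=
  List.ofFn fun i => if i < θ i then w.get i
    else if θ i = i then eL else linv (w.get (θ i))

/-- `j₂(x, y) = x⁻¹y`. -/
def j2 (p : X × X) : FreeGroup X := (FreeGroup.of p.1)⁻¹ * FreeGroup.of p.2

/-- `j₂*(x, y) = xy⁻¹`. -/
def j2s (p : X × X) : FreeGroup X := FreeGroup.of p.1 * (FreeGroup.of p.2)⁻¹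

/-- `ε̃ = ⋃_{w ∈ F(X)} w (j₂(ε) ∪ j₂*(ε)) w⁻¹` for `ε ⊆ X × X`. -/
def tilde (S : Set (X × X)) : Set (FreeGroup X) :=
  ⋃ w : FreeGroup X, (fun g => w * g * w⁻¹) '' (j2 '' S ∪ j2s '' S)

/-- The extension of an ultra-metric `d` on `X` to the alphabet `X̄` determined
by a base point `x₀`: `d(x, e) = max {d(x, x₀), 1}`, `d(x⁻¹, y⁻¹) = d(x, y)`
and `d(x⁻¹, y) = d(x, y⁻¹) = max {d(x, e), d(y, e)}` for `x, y ∈ X ∪ {e}`. -/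
def ext (d : X → X → ℝ) (x₀ : X) : Letter X → Letter X → ℝ
  | none, none => 0
  | some (x, _), none => max (d x x₀) 1
  | none, some (y, _) => max (d y x₀) 1
  | some (x, true), some (y, true) => d x y
  | some (x, false), some (y, false) => d x y
  | some (x, _), some (y, _) => max (max (d x x₀) 1) (max (d y x₀) 1)

/-- The extension of an ultra-metric `d` of diameter at most `1` on `X` to the
alphabet `X̄`, with `d(x⁻¹, y⁻¹) = d(x, y)` and
`d(x⁻¹, y) = d(x, y⁻¹) = d(x, e) = d(x⁻¹, e) = 1`. -/
def extOne (d : X → X → ℝ) : Letter X → Letter X → ℝ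
  | none, none => 0
  | some (x, true), some (y, true) => d x y
  | some (x, false), some (y, false) => d x y
  | _, _ => 1

/-- The homomorphism `α : F(X) → ℤ` extending the constant map `X → {1} ⊆ ℤ`. -/
def alpha (w : FreeGroup X) : ℤ :=
  Multiplicative.toAdd ((FreeGroup.lift fun _ : X => Multiplicative.ofAdd (1 : ℤ)) w)

/-- `F(q_r) : F(X) → F(X/F_r)`, where `X/F_r` is the quotient of `X` by the
partition into open balls of radius `r` (for an ultra-metric the relation
`d x y < r` is an equivalence relation, so `Quot` of this relation is exactly
this quotient) and `q_r` is the quotient map. -/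
def Fq (d : X → X → ℝ) (r : ℝ) :
    FreeGroup X →* FreeGroup (Quot fun x y : X => d x y < r) :=
  FreeGroup.map (Quot.mk _)

/-- The Savchenko–Zarichnyi function `d̂` on `F(X) × F(X)`:
`d̂(v, w) = 1` if `α(v) ≠ α(w)`, and
`d̂(v, w) = inf {r > 0 : F(q_r)(v) = F(q_r)(w)}` if `α(v) = α(w)`. -/
noncomputable def dHat (d : X → X → ℝ) (v w : FreeGroup X) : ℝ :=
  if alpha v = alpha w then sInf {r : ℝ | 0 < r ∧ Fq d r v = Fq d r w} else 1

lemma red_cons (x : Letter X) (l : List (Letter X)) :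
    red (x :: l) = toF x * red l := by simp [red]

lemma red_append (a b : List (Letter X)) : red (a ++ b) = red a * red b := by
  simp [red]

lemma red_replicate_eL (k : ℕ) : red (List.replicate k (eL : Letter X)) = 1 := by
  induction k with
  | zero => simp [red]
  | succ n ih => rw [List.replicate_succ, red_cons, ih]; simp [toF, eL]

lemma red_map_some (L : List (X × Bool)) :
    red (L.map some) = FreeGroup.mk L := by
  induction L with
  | nil => simp [red, FreeGroup.one_eq_mk]
  | cons p l ih =>
    obtain ⟨x, b⟩ := p
    rw [List.map_cons, red_cons, ih]
    show FreeGroup.mk [(x, b)] * FreeGroup.mk l = _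
    rw [FreeGroup.mul_mk]
    rfl

lemma rho_cons (d : Letter X → Letter X → ℝ) (x y : Letter X)
    (a b : List (Letter X)) :
    rho d (x :: a) (y :: b) = max (d x y) (rho d a b) := by
  simp [rho]

/-- Theorem `grau` (a): the Graev ultra-metric `δ_u` is maximal among all
invariant ultra-metrics on `F(X)` extending the admissible ultra-metric `d`
defined on `X̄`. -/
theorem graev_maximal_extending_barX {X : Type*} [Nonempty X]
    (d : Letter X → Letter X → ℝ) (hd : IsAdmissible d)
    (R : FreeGroup X → FreeGroup X → ℝ) (hRu : IsUltraMetric R)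
    (hRi : IsInvariant R) (hRe : ∀ a b : Letter X, R (toF a) (toF b) = d a b) :
    ∀ v w : FreeGroup X, R v w ≤ graev d v w := by
  classical
  obtain ⟨⟨_, hzero, _⟩, -⟩ := hd
  obtain ⟨_, _, hRtri⟩ := hRu
  have hleft : ∀ u w w' : FreeGroup X, R (u * w) (u * w') = R w w' := by
    intro u w w'; simpa using hRi u 1 w w'
  have hright : ∀ v w w' : FreeGroup X, R (w * v) (w' * v) = R w w' := by
    intro v w w'; simpa using hRi 1 v w w'
  have hR11 : R 1 1 = 0 := by
    have h := hRe eL eL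
    have : toF (eL : Letter X) = 1 := rfl
    rw [this] at h
    rw [h, (hzero eL eL).2 rfl]
  have key : ∀ a b : List (Letter X), a.length = b.length →
      R (red a) (red b) ≤ rho d a b := by
    intro a
    induction a with
    | nil =>
      intro b hb
      have : b = [] := by simpa using hb.symm
      subst this
      simp only [red, List.map_nil, List.prod_nil, hR11, rho, List.zipWith_nil_right,
        List.foldr_nil]
      exact le_refl 0
    | cons x as ih =>
      intro b hb
      cases b with
      | nil => simp at hb
      | cons y bs =>
        have hlen : as.length = bs.length := by simpa using hb
        rw [red_cons, red_cons, rho_cons]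
        calc R (toF x * red as) (toF y * red bs)
            ≤ max (R (toF x * red as) (toF x * red bs))
                (R (toF x * red bs) (toF y * red bs)) :=
              hRtri _ _ _
          _ = max (R (red as) (red bs)) (d x y) := by
              rw [hleft, hright, hRe]
          _ ≤ max (rho d as bs) (d x y) :=
              max_le_max (ih bs hlen) le_rfl
          _ ≤ max (d x y) (rho d as bs) := by rw [max_comm]
  intro v w
  apply le_csInf
  · refine ⟨rho d (v.toWord.map some ++ List.replicate w.toWord.length eL)
      (w.toWord.map some ++ List.replicate v.toWord.length eL),
      v.toWord.map some ++ List.replicate w.toWord.length eL,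
      w.toWord.map some ++ List.replicate v.toWord.length eL, ?_, ?_, ?_, rfl⟩
    · simp [Nat.add_comm]
    · rw [red_append, red_map_some, red_replicate_eL, mul_one, FreeGroup.mk_toWord]
    · rw [red_append, red_map_some, red_replicate_eL, mul_one, FreeGroup.mk_toWord]
  · rintro r ⟨w', v', hlen, hw, hv, rfl⟩
    rw [← hw, ← hv]
    exact key w' v' hlen

end GraevStmt
end

section
/- Let d be an admissible ultra-metric on X̄ = X ∪ X⁻¹ ∪ {e} that in addition satisfies d(x⁻¹,y) = d(x,y⁻¹) = max{d(x,e), d(y,e)} for all x,y ∈ X, and let R be any invariant ultra-metric on the free group F(X) that extends the metric d defined on X ∪ {e}. Then for every w = x₀⋯xₙ ∈ F(X) and every match θ on {0,…,lh(w)−1}, ρ_u(w, w^θ) ≥ R(w,e). -/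
/-! Graev ultra-metrics on free groups (after Gao, Savchenko–Zarichnyi and
Shlossberg, "On Graev type ultra-metrics"). -/

namespace GraevStmt

variable {X : Type*}

lemma toF_linv (a : Letter X) : toF (linv a) = (toF a)⁻¹ := by
  cases a with
  | none => simp [linv, toF]
  | some p =>
    obtain ⟨x, b⟩ := p
    show FreeGroup.mk [(x, !b)] = (FreeGroup.mk [(x, b)])⁻¹
    rw [FreeGroup.inv_mk]
    simp [FreeGroup.invRev]

lemma prod_map_mk (L : List (X × Bool)) :
    (L.map fun p => FreeGroup.mk [p]).prod = FreeGroup.mk L := by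
  induction L with
  | nil => simp [FreeGroup.one_eq_mk]
  | cons p L ih =>
    rw [List.map_cons, List.prod_cons, ih, FreeGroup.mul_mk]
    rfl

lemma red_wordOf [DecidableEq X] (w : FreeGroup X) : red (wordOf w) = w := by
  have : (wordOf w).map toF = w.toWord.map fun p => FreeGroup.mk [p] := by
    rw [wordOf, List.map_map]
    rfl
  rw [red, this, prod_map_mk, FreeGroup.mk_toWord]


lemma prod_match_interval {G : Type*} [Group G] (x : ℕ → G) (θ : ℕ → ℕ) :
    ∀ l a, (∀ i, a ≤ i → i < a + l → a ≤ θ i ∧ θ i < a + l) →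
    (∀ i, a ≤ i → i < a + l → θ (θ i) = i) →
    (∀ i j, a ≤ i → i < j → j < θ i → θ i < θ j → θ j < a + l → False) →
    ((List.range' a l).map
      (fun i => if i < θ i then x i else if θ i = i then 1 else (x (θ i))⁻¹)).prod = 1 := by
  intro l
  induction l using Nat.strong_induction_on with
  | _ l IH =>
    intro a hbd hinv hnc
    match l with
    | 0 => simp
    | Nat.succ m =>
      have hk := hbd a le_rfl (by omega)
      by_cases hk0 : θ a = a
      · rw [List.range'_succ, List.map_cons, List.prod_cons, if_neg (by omega), if_pos hk0,
          one_mul]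
        apply IH m (by omega) (a+1)
        · intro i h1 h2
          have hb := hbd i (by omega) (by omega)
          have : θ i ≠ a := by
            intro h
            have := hinv i (by omega) (by omega)
            rw [h, hk0] at this; omega
          omega
        · intro i h1 h2; exact hinv i (by omega) (by omega)
        · intro i j h1 h2 h3 h4 h5; exact hnc i j (by omega) h2 h3 h4 (by omega)
      · set k := θ a with hkdef
        have hak : a < k := by omega
        have hθk : θ k = a := hinv a le_rfl (by omega)
        have hmid : ∀ i, a < i → i < k → a < θ i ∧ θ i < k := by
          intro i hi1 hi2
          have hbi := hbd i (by omega) (by omega)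
          have h1 : θ i ≠ a := by
            intro h
            have := hinv i (by omega) (by omega)
            rw [h] at this; omega
          have h2 : θ i ≠ k := by
            intro h
            have := hinv i (by omega) (by omega)
            rw [h, hθk] at this; omega
          have h3 : ¬ k < θ i := by
            intro h
            exact hnc a i le_rfl hi1 (by omega) (by omega) hbi.2
          omega
        have htail : ∀ i, k < i → i < a + (m+1) → k < θ i ∧ θ i < a + (m+1) := by
          intro i hi1 hi2
          have hbi := hbd i (by omega) hi2
          have h1 : θ i ≠ a := by
            intro h
            have := hinv i (by omega) (by omega)
            rw [h] at this; omega
          have h2 : θ i ≠ k := by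
            intro h
            have := hinv i (by omega) (by omega)
            rw [h, hθk] at this; omega
          have h3 : ¬ (a < θ i ∧ θ i < k) := by
            rintro ⟨ha, hb⟩
            have := hmid (θ i) ha hb
            rw [hinv i (by omega) (by omega)] at this
            omega
          omega
        have e1 : List.range' a (m+1) =
            List.range' a (k-a) ++ List.range' k (m+1-(k-a)) := by
          have h := @List.range'_append a (k-a) (m+1-(k-a)) 1
          rw [show a + 1 * (k-a) = k by omega, show k-a + (m+1-(k-a)) = m+1 by omega] at h
          exact h.symm
        have e2 : List.range' a (k-a) = a :: List.range' (a+1) (k-a-1) := by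
          rw [show k - a = (k-a-1)+1 by omega, List.range'_succ, show (k-a-1)+1-1 = k-a-1 by omega]
        have e3 : List.range' k (m+1-(k-a)) = k :: List.range' (k+1) (m-(k-a)) := by
          rw [show m+1-(k-a) = (m-(k-a))+1 by omega, List.range'_succ]
        rw [e1, e2, e3]
        simp only [List.map_append, List.prod_append, List.map_cons, List.prod_cons]
        have ga : (if a < θ a then x a else if θ a = a then 1 else (x (θ a))⁻¹) = x a := by
          rw [if_pos hak]
        have gk : (if k < θ k then x k else if θ k = k then 1 else (x (θ k))⁻¹) = (x a)⁻¹ := by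
          rw [if_neg (by omega), if_neg (by omega), hθk]
        have pm : ((List.range' (a+1) (k-a-1)).map
            (fun i => if i < θ i then x i else if θ i = i then 1 else (x (θ i))⁻¹)).prod = 1 := by
          apply IH (k-a-1) (by omega) (a+1)
          · intro i h1 h2
            have := hmid i (by omega) (by omega)
            omega
          · intro i h1 h2; exact hinv i (by omega) (by omega)
          · intro i j h1 h2 h3 h4 h5; exact hnc i j (by omega) h2 h3 h4 (by omega)
        have pt : ((List.range' (k+1) (m-(k-a))).map
            (fun i => if i < θ i then x i else if θ i = i then 1 else (x (θ i))⁻¹)).prod = 1 := by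
          apply IH (m-(k-a)) (by omega) (k+1)
          · intro i h1 h2
            have := htail i (by omega) (by omega)
            omega
          · intro i h1 h2; exact hinv i (by omega) (by omega)
          · intro i j h1 h2 h3 h4 h5; exact hnc i j (by omega) h2 h3 h4 (by omega)
        rw [ga, gk, pm, pt]
        group

lemma red_matchWord (w : List (Letter X)) (θ : Fin w.length → Fin w.length)
    (hθ : IsMatch θ) : red (matchWord w θ) = 1 := by
  classical
  set θN : ℕ → ℕ := fun i => if h : i < w.length then (θ ⟨i, h⟩ : ℕ) else i with hθN
  set xN : ℕ → FreeGroup X := fun i => toF (w.getD i eL) with hxN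
  have hbd : ∀ i, 0 ≤ i → i < 0 + w.length → 0 ≤ θN i ∧ θN i < 0 + w.length := by
    intro i _ hi
    have hi' : i < w.length := by omega
    refine ⟨Nat.zero_le _, ?_⟩
    simp only [hθN]
    rw [dif_pos hi']
    simpa using (θ ⟨i, hi'⟩).isLt
  have hinv : ∀ i, 0 ≤ i → i < 0 + w.length → θN (θN i) = i := by
    intro i _ hi
    have hi' : i < w.length := by omega
    simp only [hθN]
    rw [dif_pos hi', dif_pos (θ ⟨i, hi'⟩).isLt]
    simp only [Fin.eta]
    rw [hθ.1 ⟨i, hi'⟩]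
  have hnc : ∀ i j, 0 ≤ i → i < j → j < θN i → θN i < θN j → θN j < 0 + w.length → False := by
    intro i j _ hij hjθ hθθ hb2
    have hjn : j < w.length := by
      by_contra h
      have : θN j = j := by simp only [hθN]; rw [dif_neg h]
      omega
    have hin : i < w.length := by omega
    have e1 : θN i = (θ ⟨i, hin⟩ : ℕ) := by simp only [hθN]; rw [dif_pos hin]
    have e2 : θN j = (θ ⟨j, hjn⟩ : ℕ) := by simp only [hθN]; rw [dif_pos hjn]
    refine hθ.2 ⟨i, hin⟩ ⟨j, hjn⟩ ⟨?_, ?_, ?_⟩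
    · exact hij
    · rw [Fin.lt_def]; rw [e1] at hjθ; exact hjθ
    · rw [Fin.lt_def]; rw [e1, e2] at hθθ; exact hθθ
  have hlist : (matchWord w θ).map toF = (List.range' 0 w.length).map
      (fun i => if i < θN i then xN i else if θN i = i then 1 else (xN (θN i))⁻¹) := by
    apply List.ext_getElem
    · simp [matchWord]
    · intro i h1 h2
      have hi : i < w.length := by simpa [matchWord] using h1
      rw [List.getElem_map, List.getElem_map, List.getElem_range']
      have hidx : 0 + 1 * i = i := by omega
      simp only [matchWord]
      rw [List.getElem_ofFn]
      simp only [hidx]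
      have eθ : θN i = (θ ⟨i, hi⟩ : ℕ) := by simp only [hθN]; rw [dif_pos hi]
      have hgd : ∀ (j : Fin w.length), xN (j : ℕ) = toF (w.get j) := by
        intro j
        simp only [hxN]
        rw [List.getD_eq_getElem w eL (by simpa using j.isLt)]
        rfl
      have hmk : ∀ (p : i < w.length), (⟨i, p⟩ : Fin w.length) = ⟨i, hi⟩ := fun _ => rfl
      simp only [hmk]
      have hFlt : ((⟨i, hi⟩ : Fin w.length) < θ ⟨i, hi⟩) ↔ i < (θ ⟨i, hi⟩ : ℕ) := Iff.rfl
      have hFeq : (θ ⟨i, hi⟩ = (⟨i, hi⟩ : Fin w.length)) ↔ ((θ ⟨i, hi⟩ : ℕ) = i) := Fin.ext_iff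
      rcases lt_trichotomy i ((θ ⟨i, hi⟩ : Fin w.length) : ℕ) with hlt | heq | hgt
      · have c1 : ((⟨i, hi⟩ : Fin w.length) < θ ⟨i, hi⟩) := hFlt.mpr hlt
        have c2 : i < θN i := by rw [eθ]; omega
        rw [if_pos c1, if_pos c2, hgd ⟨i, hi⟩]
      · have c1 : ¬ ((⟨i, hi⟩ : Fin w.length) < θ ⟨i, hi⟩) := by rw [hFlt]; omega
        have c2 : ¬ i < θN i := by rw [eθ]; omega
        have c3 : θ ⟨i, hi⟩ = (⟨i, hi⟩ : Fin w.length) := hFeq.mpr heq.symm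
        have c4 : θN i = i := by rw [eθ]; omega
        rw [if_neg c1, if_neg c2, if_pos c3, if_pos c4]
        rfl
      · have c1 : ¬ ((⟨i, hi⟩ : Fin w.length) < θ ⟨i, hi⟩) := by rw [hFlt]; omega
        have c2 : ¬ i < θN i := by rw [eθ]; omega
        have c3 : ¬ θ ⟨i, hi⟩ = (⟨i, hi⟩ : Fin w.length) := by rw [hFeq]; omega
        have c4 : ¬ θN i = i := by rw [eθ]; omega
        rw [if_neg c1, if_neg c2, if_neg c3, if_neg c4, toF_linv, eθ, hgd (θ ⟨i, hi⟩)]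
  rw [red, hlist, prod_match_interval xN θN w.length 0 hbd hinv hnc]

lemma mk_neg (x : X) : toF (neg x) = (toF (pos x))⁻¹ := toF_linv (pos x)


/-- The analogue of Claim 1 used in Theorem `grau` (b): if
`d(x⁻¹, y) = d(x, y⁻¹) = max {d(x, e), d(y, e)}` and `R` is an invariant
ultra-metric on `F(X)` extending `d` defined on `X ∪ {e}`, then for every
`w = x₀⋯xₙ ∈ F(X)` and every match `θ` on `{0, …, lh(w) - 1}` we have
`ρ_u(w, w^θ) ≥ R(w, e)`. -/
theorem rho_match_ge_of_extends_XunionE {X : Type*} [Nonempty X] [DecidableEq X]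
    (d : Letter X → Letter X → ℝ) (hd : IsAdmissible d)
    (hmax : ∀ x y : X,
      d (neg x) (pos y) = max (d (pos x) eL) (d (pos y) eL) ∧
      d (pos x) (neg y) = max (d (pos x) eL) (d (pos y) eL))
    (R : FreeGroup X → FreeGroup X → ℝ) (hRu : IsUltraMetric R)
    (hRi : IsInvariant R)
    (hRe : ∀ a b : Letter X, (a = eL ∨ ∃ x : X, a = pos x) →
      (b = eL ∨ ∃ x : X, b = pos x) → R (toF a) (toF b) = d a b)
    (w : FreeGroup X) (θ : Fin (wordOf w).length → Fin (wordOf w).length)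
    (hθ : IsMatch θ) :
    R w 1 ≤ rho d (wordOf w) (matchWord (wordOf w) θ) := by
  obtain ⟨Rsym, Rzero, Rtri⟩ := hRu
  have R11 : R 1 1 = 0 := (Rzero 1 1).mpr rfl
  have Rinv2 : ∀ g h : FreeGroup X, R g⁻¹ h⁻¹ = R h g := by
    intro g h
    have := hRi g⁻¹ h⁻¹ h g
    simpa using this
  have Rx1 : ∀ x : X, R 1 (toF (pos x))⁻¹ = R (toF (pos x)) 1 := by
    intro x
    have := hRi (toF (pos x))⁻¹ 1 (toF (pos x)) 1
    simpa using this
  have hpx1 : ∀ x : X, R (toF (pos x)) 1 = d (pos x) eL := fun x =>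
    hRe (pos x) eL (Or.inr ⟨x, rfl⟩) (Or.inl rfl)
  have hnx1 : ∀ x : X, R (toF (pos x))⁻¹ 1 = d (pos x) eL := by
    intro x
    rw [Rsym, Rx1, hpx1]
  have hb : ∀ a b : Letter X, R (toF a) (toF b) ≤ d a b := by
    rintro (_ | ⟨x, _ | _⟩) (_ | ⟨y, _ | _⟩)
    -- none none
    · show R (toF (eL : Letter X)) (toF eL) ≤ d eL eL
      have h1 : R (toF (eL : Letter X)) (toF eL) = 0 := (Rzero _ _).mpr rfl
      have h2 : d eL eL = 0 := (hd.1.2.1 _ _).mpr rfl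
      rw [h1, h2]
    -- none, neg y
    · show R (toF (eL : Letter X)) (toF (neg y)) ≤ d eL (neg y)
      have : R (toF (eL : Letter X)) (toF (neg y)) = d eL (neg y) := by
        calc R (toF (eL : Letter X)) (toF (neg y))
            = R 1 (toF (pos y))⁻¹ := by rw [mk_neg y]; rfl
          _ = R (toF (pos y)) 1 := Rx1 y
          _ = d (pos y) eL := hpx1 y
          _ = d (neg y) eL := hd.2.2.1 y
          _ = d eL (neg y) := hd.1.1 _ _
      exact this.le
    -- none, pos y
    · show R (toF (eL : Letter X)) (toF (pos y)) ≤ d eL (pos y)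
      exact (hRe eL (pos y) (Or.inl rfl) (Or.inr ⟨y, rfl⟩)).le
    -- neg x, none
    · show R (toF (neg x)) (toF (eL : Letter X)) ≤ d (neg x) eL
      have : R (toF (neg x)) (toF (eL : Letter X)) = d (neg x) eL := by
        calc R (toF (neg x)) (toF (eL : Letter X))
            = R (toF (pos x))⁻¹ 1 := by rw [mk_neg x]; rfl
          _ = d (pos x) eL := hnx1 x
          _ = d (neg x) eL := hd.2.2.1 x
      exact this.le
    -- neg x, neg y
    · show R (toF (neg x)) (toF (neg y)) ≤ d (neg x) (neg y)
      have : R (toF (neg x)) (toF (neg y)) = d (neg x) (neg y) := by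
        calc R (toF (neg x)) (toF (neg y))
            = R (toF (pos x))⁻¹ (toF (pos y))⁻¹ := by rw [mk_neg x, mk_neg y]
          _ = R (toF (pos y)) (toF (pos x)) := Rinv2 _ _
          _ = d (pos y) (pos x) := hRe _ _ (Or.inr ⟨y, rfl⟩) (Or.inr ⟨x, rfl⟩)
          _ = d (pos x) (pos y) := hd.1.1 _ _
          _ = d (neg x) (neg y) := (hd.2.1 x y).symm
      exact this.le
    -- neg x, pos y
    · show R (toF (neg x)) (toF (pos y)) ≤ d (neg x) (pos y)
      have t := Rtri (toF (neg x)) 1 (toF (pos y))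
      have e1 : R (toF (neg x)) 1 = d (pos x) eL := by
        rw [show toF (neg x : Letter X) = (toF (pos x))⁻¹ from mk_neg x, hnx1]
      have e2 : R 1 (toF (pos y)) = d (pos y) eL := by
        rw [Rsym]; exact hpx1 y
      rw [e1, e2] at t
      rw [show d (neg x) (pos y) = max (d (pos x) eL) (d (pos y) eL) from (hmax x y).1]
      exact t
    -- pos x, none
    · show R (toF (pos x)) (toF (eL : Letter X)) ≤ d (pos x) eL
      exact (hRe (pos x) eL (Or.inr ⟨x, rfl⟩) (Or.inl rfl)).le
    -- pos x, neg y
    · show R (toF (pos x)) (toF (neg y)) ≤ d (pos x) (neg y)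
      have t := Rtri (toF (pos x)) 1 (toF (neg y))
      have e1 : R (toF (pos x)) 1 = d (pos x) eL := hpx1 x
      have e2 : R 1 (toF (neg y)) = d (pos y) eL := by
        rw [show toF (neg y : Letter X) = (toF (pos y))⁻¹ from mk_neg y, Rx1, hpx1]
      rw [e1, e2] at t
      rw [show d (pos x) (neg y) = max (d (pos x) eL) (d (pos y) eL) from (hmax x y).2]
      exact t
    -- pos x, pos y
    · show R (toF (pos x)) (toF (pos y)) ≤ d (pos x) (pos y)
      exact (hRe (pos x) (pos y) (Or.inr ⟨x, rfl⟩) (Or.inr ⟨y, rfl⟩)).le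
  have chain : ∀ u v : List (Letter X), u.length = v.length →
      R (red u) (red v) ≤ rho d u v := by
    intro u
    induction u with
    | nil =>
      intro v hv
      obtain rfl : v = [] := List.length_eq_zero_iff.mp hv.symm
      have e1 : red ([] : List (Letter X)) = 1 := by simp [red]
      have e2 : rho d ([] : List (Letter X)) [] = 0 := by simp [rho]
      rw [e1, e2, R11]
    | cons a u ih =>
      intro v hv
      cases v with
      | nil => simp at hv
      | cons b v =>
        have hlen : u.length = v.length := by simpa using hv
        have e1 : red (a :: u) = toF a * red u := by simp [red]
        have e2 : red (b :: v) = toF b * red v := by simp [red]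
        have e3 : rho d (a :: u) (b :: v) = max (d a b) (rho d u v) := by simp [rho]
        have t := Rtri (toF a * red u) (toF a * red v) (toF b * red v)
        have i1 : R (toF a * red u) (toF a * red v) = R (red u) (red v) := by
          have := hRi (toF a) 1 (red u) (red v)
          simpa using this
        have i2 : R (toF a * red v) (toF b * red v) = R (toF a) (toF b) := by
          have := hRi 1 (red v) (toF a) (toF b)
          simpa using this
        rw [e1, e2, e3]
        refine le_trans t (max_le ?_ ?_)
        · rw [i1]; exact le_trans (ih v hlen) (le_max_right _ _)
        · rw [i2]; exact le_trans (hb a b) (le_max_left _ _)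
  have hlen2 : (wordOf w).length = (matchWord (wordOf w) θ).length := by
    simp [matchWord]
  have key := chain (wordOf w) (matchWord (wordOf w) θ) hlen2
  rw [red_wordOf, red_matchWord _ _ hθ] at key
  exact key

end GraevStmt
end
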